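/- arXiv:1912.03220 — 2 statements merged into one kernel-verified Lean document; each statement's English description precedes it below -/
import Mathlib

section
/- Let F be an affine IFS on ℝ^d and let G ⊆ F be a nonempty subset. If F has an attractor A_F, then G has an attractor A_G, and A_G ⊆ A_F. -/
open Metric Filter Set
open scoped RealInnerProductSpace

noncomputable section

/-- The Hutchinson operator associated with a family of maps. -/
def hutch {ι E : Type*} (f : ι → E → E) (K : Set E) : Set E := ⋃ i, f i '' K

/-- `A` is the attractor of the IFS `f`: `A` is a nonempty compact set such that the iterates
of the Hutchinson operator applied to any nonempty compact set converge to `A` in the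
Hausdorff metric. -/
def IsAttractor {ι E : Type*} [MetricSpace E] (f : ι → E → E) (A : Set E) : Prop :=
  A.Nonempty ∧ IsCompact A ∧
    ∀ K : Set E, K.Nonempty → IsCompact K →
      Tendsto (fun n : ℕ => hausdorffDist ((hutch f)^[n] K) A) atTop (nhds 0)

/-- The joint spectral radius of a finite family of continuous linear maps. -/
def jsr {E : Type*} [NormedAddCommGroup E] [NormedSpace ℝ E] {N : ℕ}
    (L : Fin N → E →L[ℝ] E) : ℝ :=
  limsup (fun k : ℕ =>
    (⨆ σ : Fin k → Fin N, ‖(List.ofFn fun j : Fin k => L (σ j)).prod‖) ^ ((1 : ℝ) / (k : ℝ)))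
    atTop

/-- The one-parameter affine family `f_{(i,t)}(x) = t • f_i(x) + q_i` where
`f_i(x) = L_i x + a_i`. -/
def fam {E : Type*} [NormedAddCommGroup E] [NormedSpace ℝ E] {N : ℕ}
    (L : Fin N → E →L[ℝ] E) (a q : Fin N → E) (t : ℝ) (i : Fin N) (x : E) : E :=
  t • (L i x + a i) + q i

/-- The family is linear: every `f_{(i,t)}`, `t ∈ [0, t₀)`, is conjugate to a linear map by a
single invertible affine map `h` independent of `i` and `t`. -/
def IsLinearFamily {E : Type*} [NormedAddCommGroup E] [NormedSpace ℝ E] {N : ℕ}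
    (L : Fin N → E →L[ℝ] E) (a q : Fin N → E) : Prop :=
  ∃ h : E ≃ᵃ[ℝ] E, ∀ i : Fin N, ∀ t : ℝ, 0 ≤ t → t < 1 / jsr L →
    ∃ M : E →ₗ[ℝ] E, ∀ x, fam L a q t i x = h.symm (M (h x))

/-- The family is quasi-linear: for each `t ∈ [0, t₀)` there is an invertible affine map `h_t`,
independent of `i`, conjugating every `f_{(i,t)}` to a linear map. -/
def IsQuasiLinearFamily {E : Type*} [NormedAddCommGroup E] [NormedSpace ℝ E] {N : ℕ}
    (L : Fin N → E →L[ℝ] E) (a q : Fin N → E) : Prop :=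
  ∀ t : ℝ, 0 ≤ t → t < 1 / jsr L → ∃ h : E ≃ᵃ[ℝ] E, ∀ i : Fin N,
    ∃ M : E →ₗ[ℝ] E, ∀ x, fam L a q t i x = h.symm (M (h x))

/-- The family is semi-linear: for each `i` there is an invertible affine map `h_i`,
independent of `t`, conjugating `f_{(i,t)}` to a linear map for all `t ∈ [0, t₀)`. -/
def IsSemiLinearFamily {E : Type*} [NormedAddCommGroup E] [NormedSpace ℝ E] {N : ℕ}
    (L : Fin N → E →L[ℝ] E) (a q : Fin N → E) : Prop :=
  ∀ i : Fin N, ∃ h : E ≃ᵃ[ℝ] E, ∀ t : ℝ, 0 ≤ t → t < 1 / jsr L →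
    ∃ M : E →ₗ[ℝ] E, ∀ x, fam L a q t i x = h.symm (M (h x))

/-- The hyperplane `{x | φ x = c}` (with `φ` a nonzero linear functional) separates `S`:
it misses `S` and `S` meets both open half-spaces. -/
def SeparatesHyp {E : Type*} [AddCommGroup E] [Module ℝ E]
    (φ : E →ₗ[ℝ] ℝ) (c : ℝ) (S : Set E) : Prop :=
  φ ≠ 0 ∧ (∀ x ∈ S, φ x ≠ c) ∧ (∃ x ∈ S, φ x < c) ∧ (∃ x ∈ S, c < φ x)

/-- A set is strongly disconnected if some hyperplane separates it. -/
def StronglyDisconnected {E : Type*} [AddCommGroup E] [Module ℝ E] (S : Set E) : Prop :=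
  ∃ (φ : E →ₗ[ℝ] ℝ) (c : ℝ), SeparatesHyp φ c S

/-- A set is weakly connected if no hyperplane separates it. -/
def WeaklyConnected {E : Type*} [AddCommGroup E] [Module ℝ E] (S : Set E) : Prop :=
  ¬ StronglyDisconnected S

/-- A weak component of a compact set `S` is a maximal weakly connected compact subset of `S`. -/
def IsWeakComponent {E : Type*} [NormedAddCommGroup E] [NormedSpace ℝ E]
    (S C : Set E) : Prop :=
  C.Nonempty ∧ C ⊆ S ∧ IsCompact C ∧ WeaklyConnected C ∧
    ∀ C' : Set E, C' ⊆ S → IsCompact C' → WeaklyConnected C' → C ⊆ C' → C' = C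

/-- A (nondegenerate right circular) cone with apex `x`, axis direction `v`, radius `r` and
half-angle `θ`. -/
def coneSet {E : Type*} [NormedAddCommGroup E] [InnerProductSpace ℝ E]
    (x v : E) (r θ : ℝ) : Set E :=
  {y | ‖y - x‖ ≤ r ∧ ‖y - x‖ * Real.cos θ ≤ ⟪y - x, v⟫}

/-- A boundary point `x` of `K` is a cusp of `K` if no cone with apex `x` is contained in `K`. -/
def IsCuspPoint {E : Type*} [NormedAddCommGroup E] [InnerProductSpace ℝ E]
    (K : Set E) (x : E) : Prop :=
  x ∈ frontier K ∧ ∀ (v : E) (r θ : ℝ), ‖v‖ = 1 → 0 < r → 0 < θ → θ < Real.pi / 2 →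
    ¬ coneSet x v r θ ⊆ K

/-- The one-parameter family is tame: whenever the attractor `A_t` has nonempty interior,
some fixed point of a map of `F_t` is not a cusp of `A_t`. -/
def TameFamily {E : Type*} [NormedAddCommGroup E] [InnerProductSpace ℝ E] {N : ℕ}
    (L : Fin N → E →L[ℝ] E) (a q : Fin N → E) : Prop :=
  ∀ t : ℝ, 0 ≤ t → t < 1 / jsr L → ∀ A : Set E, IsAttractor (fam L a q t) A →
    (interior A).Nonempty → ∃ (i : Fin N) (x : E), fam L a q t i x = x ∧ ¬ IsCuspPoint A x

end

/-!
Iterating `F` on a large ball converges to `A`, so for some `m` every composition `f_σ` of `m`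
maps of `F` sends the ball of radius `diam A + 2` into the `1`-neighbourhood of `A`; this forces the
linear part of `f_σ` to have norm `< 1`. Compositions of `m` maps of `G` are among these, so the
`m`-th iterate of the Hutchinson operator of `G` is a contraction of the complete space of nonempty
compact sets with the Hausdorff metric, and its fixed point `B` attracts every orbit of `G`.
Since `G^n(A) ⊆ F^n(A)`, passing to the limit gives `B ⊆ A`.
-/

open Topology TopologicalSpace
open scoped NNReal

section Words

variable {ι κ E : Type*}

def wordMap (g : ι → E → E) : {m : ℕ} → (Fin m → ι) → E → E
  | 0, _ => id
  | _ + 1, σ => g (σ 0) ∘ wordMap g (Fin.tail σ)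

theorem wordMap_comp (g : ι → E → E) (e : κ → ι) :
    ∀ {m : ℕ} (σ : Fin m → κ), wordMap (fun k => g (e k)) σ = wordMap g (e ∘ σ)
  | 0, _ => rfl
  | _ + 1, σ => by simp only [wordMap, wordMap_comp g e (Fin.tail σ)]; rfl

theorem hutch_iterate (g : ι → E → E) (m : ℕ) (K : Set E) :
    (hutch g)^[m] K = hutch (fun σ : Fin m → ι => wordMap g σ) K := by
  induction m with
  | zero => simp [hutch, wordMap, iUnion_const]
  | succ m ih =>
    ext x
    simp only [Function.iterate_succ_apply', ih, hutch, mem_iUnion, mem_image]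
    constructor
    · rintro ⟨i, _, ⟨σ, y, hy, rfl⟩, rfl⟩
      exact ⟨Fin.cons i σ, y, hy, by simp [wordMap]⟩
    · rintro ⟨σ, y, hy, rfl⟩
      exact ⟨σ 0, _, ⟨Fin.tail σ, y, hy, rfl⟩, rfl⟩

theorem hutch_iterate_comp_subset (g : ι → E → E) (e : κ → ι) (m : ℕ) (K : Set E) :
    (hutch fun k => g (e k))^[m] K ⊆ (hutch g)^[m] K := by
  simp only [hutch_iterate, hutch, wordMap_comp]
  exact iUnion_subset fun σ => subset_iUnion (fun τ : Fin m → ι => wordMap g τ '' K) (e ∘ σ)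

end Words

section Hausdorff

variable {ι E : Type*} [MetricSpace E]

theorem LipschitzWith.infEDist_image_le {c : ℝ≥0} {g : E → E} (hg : LipschitzWith c g) (x : E)
    {t : Set E} (ht : t.Nonempty) : infEDist (g x) (g '' t) ≤ c * infEDist x t := by
  rcases eq_or_ne c 0 with rfl | hc
  · obtain ⟨y, hy⟩ := ht
    simpa using infEDist_le_edist_of_mem (mem_image_of_mem g hy) |>.trans (hg x y)
  · simp only [infEDist, iInf_image,
      ENNReal.mul_iInf_of_ne (ENNReal.coe_ne_zero.2 hc) ENNReal.coe_ne_top]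
    exact iInf₂_mono fun y _ => hg x y

theorem LipschitzWith.hausdorffEDist_image_le {c : ℝ≥0} {g : E → E} (hg : LipschitzWith c g)
    {s t : Set E} (hs : s.Nonempty) (ht : t.Nonempty) :
    hausdorffEDist (g '' s) (g '' t) ≤ c * hausdorffEDist s t := by
  refine hausdorffEDist_le_of_infEDist ?_ ?_ <;> rintro _ ⟨x, hx, rfl⟩
  · exact (hg.infEDist_image_le x ht).trans
      (by gcongr; exact infEDist_le_hausdorffEDist_of_mem hx)
  · rw [hausdorffEDist_comm]
    exact (hg.infEDist_image_le x hs).trans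
      (by gcongr; exact infEDist_le_hausdorffEDist_of_mem hx)

theorem hausdorffEDist_hutch_le {c : ℝ≥0} {g : ι → E → E} (hg : ∀ i, LipschitzWith c (g i))
    {K K' : Set E} (hK : K.Nonempty) (hK' : K'.Nonempty) :
    hausdorffEDist (hutch g K) (hutch g K') ≤ c * hausdorffEDist K K' :=
  hausdorffEDist_iUnion_le.trans <| iSup_le fun i => (hg i).hausdorffEDist_image_le hK hK'

theorem NonemptyCompacts.subset_of_tendsto {X Y : ℕ → NonemptyCompacts E}
    {A B : NonemptyCompacts E} (hXY : ∀ n, (X n : Set E) ⊆ Y n)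
    (hX : Tendsto X atTop (𝓝 B)) (hY : Tendsto Y atTop (𝓝 A)) : (B : Set E) ⊆ A := by
  intro b hb
  have hcont := (lipschitz_infDist_set b).continuous
  have hle : infDist b A ≤ infDist b B :=
    le_of_tendsto_of_tendsto' ((hcont.tendsto A).comp hY) ((hcont.tendsto B).comp hX)
      fun n => infDist_le_infDist_of_subset (hXY n) (X n).nonempty
  rw [infDist_zero_of_mem hb] at hle
  exact (A.isCompact.isClosed.mem_iff_infDist_zero A.nonempty).2 (hle.antisymm infDist_nonneg)

end Hausdorff

theorem Filter.tendsto_atTop_of_tendsto_mul_add {α : Type*} {u : ℕ → α} {l : Filter α} {m : ℕ}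
    (hm : 0 < m) (h : ∀ r < m, Tendsto (fun k => u (m * k + r)) atTop l) :
    Tendsto u atTop l := by
  intro s hs
  obtain ⟨K, hK⟩ := eventually_atTop.1 <|
    eventually_all.2 fun r : Fin m => h r r.2 hs
  refine mem_map.2 (mem_atTop_sets.2 ⟨m * K, fun n hn => ?_⟩)
  rw [mem_preimage, ← Nat.div_add_mod n m]
  exact hK (n / m) ((Nat.le_div_iff_mul_le hm).2 (by linarith [mul_comm m K]))
    ⟨n % m, Nat.mod_lt n hm⟩

theorem ContractingWith.tendsto_iterate_fixedPoint_of_iterate {X : Type*} [MetricSpace X]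
    [Nonempty X] [CompleteSpace X] {c : ℝ≥0} {T : X → X} {m : ℕ} (hm : 0 < m)
    (hT : ContractingWith c T^[m]) (x : X) :
    Tendsto (fun n => T^[n] x) atTop (𝓝 (hT.fixedPoint T^[m])) :=
  tendsto_atTop_of_tendsto_mul_add hm fun r _ => by
    simpa [Function.iterate_add_apply, Function.iterate_mul] using
      hT.tendsto_iterate_fixedPoint (T^[r] x)

section HutchinsonOperator

variable {ι κ E : Type*} [MetricSpace E] [Finite ι] [Nonempty ι]

def hutchCompacts (g : ι → E → E) (hg : ∀ i, Continuous (g i)) (K : NonemptyCompacts E) :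
    NonemptyCompacts E :=
  ⟨⟨hutch g K, isCompact_iUnion fun i => K.isCompact.image (hg i)⟩,
    (K.nonempty.image _).mono (subset_iUnion (fun i => g i '' K) (Classical.arbitrary ι))⟩

theorem coe_hutchCompacts_iterate (g : ι → E → E) (hg : ∀ i, Continuous (g i)) (n : ℕ)
    (K : NonemptyCompacts E) : ((hutchCompacts g hg)^[n] K : Set E) = (hutch g)^[n] K := by
  induction n with
  | zero => rfl
  | succ n ih => rw [Function.iterate_succ_apply', Function.iterate_succ_apply', ← ih]; rfl

theorem isAttractor_iff_tendsto (g : ι → E → E) (hg : ∀ i, Continuous (g i))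
    (B : NonemptyCompacts E) :
    IsAttractor g B ↔ ∀ K, Tendsto (fun n => (hutchCompacts g hg)^[n] K) atTop (𝓝 B) := by
  have hdist : ∀ K, (fun n => dist ((hutchCompacts g hg)^[n] K) B) =
      fun n => hausdorffDist ((hutch g)^[n] K) B := fun K => by
    simp only [NonemptyCompacts.dist_eq, coe_hutchCompacts_iterate]
  simp only [tendsto_iff_dist_tendsto_zero (f := fun n => (hutchCompacts g hg)^[n] _), hdist]
  exact ⟨fun h K => h.2.2 K K.nonempty K.isCompact,
    fun h => ⟨B.nonempty, B.isCompact, fun K hK hK' => h ⟨⟨K, hK'⟩, hK⟩⟩⟩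

theorem exists_isAttractor_of_lipschitzWith_wordMap [Nonempty E] [CompleteSpace E]
    {g : ι → E → E} (hg : ∀ i, Continuous (g i)) {m : ℕ} (hm : 0 < m) {c : ℝ≥0} (hc : c < 1)
    (hlip : ∀ σ : Fin m → ι, LipschitzWith c (wordMap g σ)) :
    ∃ B : NonemptyCompacts E, IsAttractor g B := by
  have hT : ContractingWith c (hutchCompacts g hg)^[m] := by
    refine ⟨hc, fun K K' => ?_⟩
    change hausdorffEDist _ _ ≤ c * hausdorffEDist _ _
    simp only [coe_hutchCompacts_iterate, hutch_iterate]
    exact hausdorffEDist_hutch_le hlip K.nonempty K'.nonempty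
  exact ⟨_, (isAttractor_iff_tendsto g hg _).2 (hT.tendsto_iterate_fixedPoint_of_iterate hm)⟩

theorem IsAttractor.subset_of_isAttractor_comp [Finite κ] [Nonempty κ] {g : ι → E → E}
    (hg : ∀ i, Continuous (g i)) (e : κ → ι) {A B : Set E} (hA : IsAttractor g A)
    (hB : IsAttractor (fun k => g (e k)) B) : B ⊆ A := by
  set A' : NonemptyCompacts E := ⟨⟨A, hA.2.1⟩, hA.1⟩
  set B' : NonemptyCompacts E := ⟨⟨B, hB.2.1⟩, hB.1⟩
  have hge : ∀ k, Continuous (g (e k)) := fun k => hg (e k)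
  refine NonemptyCompacts.subset_of_tendsto (A := A') (B := B') (fun n => ?_)
    ((isAttractor_iff_tendsto _ hge B').1 hB A') ((isAttractor_iff_tendsto g hg A').1 hA A')
  simp only [coe_hutchCompacts_iterate]
  exact hutch_iterate_comp_subset g e n A

end HutchinsonOperator

section Affine

variable {ι E : Type*} [NormedAddCommGroup E] [NormedSpace ℝ E]

def wordLinear (L : ι → E →L[ℝ] E) : {m : ℕ} → (Fin m → ι) → E →L[ℝ] E
  | 0, _ => ContinuousLinearMap.id ℝ E
  | _ + 1, σ => L (σ 0) ∘L wordLinear L (Fin.tail σ)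

variable {L : ι → E →L[ℝ] E} {a : ι → E} {f : ι → E → E}

theorem continuous_of_forall_eq_add (hf : ∀ i x, f i x = L i x + a i) (i : ι) : Continuous (f i) := by
  rw [show f i = fun x => L i x + a i from funext (hf i)]
  fun_prop

theorem wordMap_sub_wordMap (hf : ∀ i x, f i x = L i x + a i) :
    ∀ {m : ℕ} (σ : Fin m → ι) (x y : E),
      wordMap f σ x - wordMap f σ y = wordLinear L σ (x - y)
  | 0, _, _, _ => rfl
  | _ + 1, σ, x, y => by
    simp only [wordMap, wordLinear, Function.comp_apply, ContinuousLinearMap.comp_apply, hf,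
      add_sub_add_right_eq_sub, ← map_sub, wordMap_sub_wordMap hf (Fin.tail σ)]

theorem lipschitzWith_wordMap (hf : ∀ i x, f i x = L i x + a i) {m : ℕ} (σ : Fin m → ι) :
    LipschitzWith ‖wordLinear L σ‖₊ (wordMap f σ) :=
  LipschitzWith.of_dist_le_mul fun x y => by
    rw [dist_eq_norm, dist_eq_norm, wordMap_sub_wordMap hf]
    exact (wordLinear L σ).le_opNorm _

/-- If `‖M‖ ≥ 1`, then for some `‖v‖ < 1` with `‖M v‖ > 1/2` the images of `±R v` would be more than `R`
apart, yet both lie within `1` of `A`. -/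
theorem norm_lt_one_of_mapsTo_thickening {φ : E → E} {M : E →L[ℝ] E}
    (hφ : ∀ x y, φ x - φ y = M (x - y)) {A : Set E} (hA : Bornology.IsBounded A) {R : ℝ}
    (hR : diam A + 2 ≤ R) (hmaps : MapsTo φ (closedBall 0 R) (thickening 1 A)) : ‖M‖ < 1 := by
  by_contra! hM
  have hR0 : 0 < R := by linarith [diam_nonneg (s := A)]
  obtain ⟨v, hv, hMv⟩ := M.exists_lt_apply_of_lt_opNorm (r := 1 / 2) (by linarith)
  have hv₁ : R • v ∈ closedBall (0 : E) R := by
    simpa [norm_smul, abs_of_pos hR0] using mul_le_of_le_one_right hR0.le hv.le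
  have hv₂ : -(R • v) ∈ closedBall (0 : E) R := by simpa using hv₁
  obtain ⟨p, hp, hdp⟩ := mem_thickening_iff.1 (hmaps hv₁)
  obtain ⟨q, hq, hdq⟩ := mem_thickening_iff.1 (hmaps hv₂)
  have hspread : R < dist (φ (R • v)) (φ (-(R • v))) := by
    rw [dist_eq_norm, hφ, sub_neg_eq_add, ← two_smul ℝ, smul_smul, map_smul, norm_smul,
      Real.norm_eq_abs, abs_of_pos (by positivity)]
    nlinarith
  have hpq : dist p q ≤ diam A := dist_le_diam_of_mem hA hp hq
  linarith [dist_triangle4 (φ (R • v)) p q (φ (-(R • v))), dist_comm q (φ (-(R • v)))]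

end Affine

theorem IsAttractor.exists_lipschitzWith_wordMap {ι E : Type*} [Finite ι] [Nonempty ι]
    [NormedAddCommGroup E] [NormedSpace ℝ E] [ProperSpace E] {L : ι → E →L[ℝ] E} {a : ι → E}
    {f : ι → E → E} (hf : ∀ i x, f i x = L i x + a i) {A : Set E} (hA : IsAttractor f A) :
    ∃ m, 0 < m ∧ ∃ c : ℝ≥0, c < 1 ∧ ∀ σ : Fin m → ι, LipschitzWith c (wordMap f σ) := by
  have hfc := continuous_of_forall_eq_add hf
  set R := diam A + 2
  let K : NonemptyCompacts E := ⟨⟨closedBall 0 R, isCompact_closedBall 0 R⟩,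
    nonempty_closedBall.2 (by positivity)⟩
  obtain ⟨m, hm, hclose⟩ : ∃ m, 0 < m ∧ hausdorffDist ((hutch f)^[m] K) A < 1 :=
    ((eventually_gt_atTop 0).and
      ((hA.2.2 K K.nonempty K.isCompact).eventually_lt_const one_pos)).exists
  have hFm : ((hutch f)^[m] K).Nonempty ∧ IsCompact ((hutch f)^[m] K) := by
    rw [← coe_hutchCompacts_iterate f hfc]
    exact ⟨NonemptyCompacts.nonempty _, NonemptyCompacts.isCompact _⟩
  have hnorm : ∀ σ : Fin m → ι, ‖wordLinear L σ‖ < 1 := fun σ =>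
    norm_lt_one_of_mapsTo_thickening (wordMap_sub_wordMap hf σ) hA.2.1.isBounded le_rfl
      fun x hx => by
        have hσx : wordMap f σ x ∈ (hutch f)^[m] K := by
          rw [hutch_iterate]
          exact mem_iUnion.2 ⟨σ, mem_image_of_mem _ hx⟩
        exact mem_thickening_iff.2 (exists_dist_lt_of_hausdorffDist_lt hσx hclose
          (hausdorffEDist_ne_top_of_nonempty_of_bounded hFm.1 hA.1 hFm.2.isBounded
            hA.2.1.isBounded))
  obtain ⟨σ₀, hσ₀⟩ := Finite.exists_max fun σ : Fin m → ι => ‖wordLinear L σ‖₊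
  exact ⟨m, hm, _, hnorm σ₀, fun σ => (lipschitzWith_wordMap hf σ).weaken (hσ₀ σ)⟩

theorem stmt11_general {d N : ℕ}
    (L : Fin N → EuclideanSpace ℝ (Fin d) →L[ℝ] EuclideanSpace ℝ (Fin d))
    (a : Fin N → EuclideanSpace ℝ (Fin d))
    (f : Fin N → EuclideanSpace ℝ (Fin d) → EuclideanSpace ℝ (Fin d))
    (hf : ∀ i x, f i x = L i x + a i)
    (s : Finset (Fin N)) (hs : s.Nonempty)
    (A : Set (EuclideanSpace ℝ (Fin d))) (hA : IsAttractor f A) :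
    ∃ B : Set (EuclideanSpace ℝ (Fin d)),
      IsAttractor (fun i : {i // i ∈ s} => f i.1) B ∧ B ⊆ A := by
  have : Nonempty s := hs.to_subtype
  have : Nonempty (Fin N) := ⟨hs.choose⟩
  have hfc := continuous_of_forall_eq_add hf
  obtain ⟨m, hm, c, hc, hlip⟩ := hA.exists_lipschitzWith_wordMap hf
  obtain ⟨B, hB⟩ := exists_isAttractor_of_lipschitzWith_wordMap (fun i : s => hfc i) hm hc
    fun σ => by simpa only [wordMap_comp] using hlip (Subtype.val ∘ σ)
  exact ⟨B, hB, hA.subset_of_isAttractor_comp hfc Subtype.val hB⟩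

/-- If an affine IFS `F` on `ℝ^d` has an attractor `A_F` and `G` is a
nonempty subfamily of `F`, then `G` has an attractor `A_G` and `A_G ⊆ A_F`. -/
theorem stmt11 {d N : ℕ} (hN : 2 ≤ N)
    (L : Fin N → EuclideanSpace ℝ (Fin d) →L[ℝ] EuclideanSpace ℝ (Fin d))
    (hL : ∀ i, Function.Bijective (L i))
    (a : Fin N → EuclideanSpace ℝ (Fin d))
    (f : Fin N → EuclideanSpace ℝ (Fin d) → EuclideanSpace ℝ (Fin d))
    (hf : ∀ i x, f i x = L i x + a i)
    (s : Finset (Fin N)) (hs : s.Nonempty)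
    (A : Set (EuclideanSpace ℝ (Fin d))) (hA : IsAttractor f A) :
    ∃ B : Set (EuclideanSpace ℝ (Fin d)),
      IsAttractor (fun i : {i // i ∈ s} => f i.1) B ∧ B ⊆ A :=
  stmt11_general L a f hf s hs A hA
end

section
/- Let F_t be a bounded one-parameter family on ℝ^d, with attractor A_t for t ∈ [0, t_0), and let K_t denote the convex hull of A_t. Then K_s ⊆ K_t for all 0 ≤ s ≤ t < t_0; moreover K_t is the smallest convex compact set K such that F_t(K) ⊆ K. -/
open Metric Filter Set
open scoped RealInnerProductSpace

/-!
Semi-linearity means that `q i` is a fixed point of every `f_{(i,t)}`, so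
`f_{(i,t)} x = q i + t • L i (x - q i)`; for `s ≤ t` the point `f_{(i,s)} x` therefore lies on the
segment from `q i` to `f_{(i,t)} x`. The attractor `A_t` is invariant and contains the fixed points
`q i`, so its convex hull `K_t` is invariant under `F_t` and hence under `F_s`. Conversely, iterating
`F_t` on any nonempty compact invariant set `K` stays inside `K` and converges to `A_t`, so
`A_t ⊆ K`, and `K_t ⊆ K` when `K` is convex. Applied to `F_s` and `K = K_t` (compact by
Carathéodory's theorem) this gives `K_s ⊆ K_t`.
-/

open Filter Topology Bornology

theorem isCompact_convexHull {E : Type*} [NormedAddCommGroup E] [NormedSpace ℝ E]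
    [FiniteDimensional ℝ E] {s : Set E} (hs : IsCompact s) :
    IsCompact (convexHull ℝ s) := by
  rcases s.eq_empty_or_nonempty with rfl | ⟨x₀, hx₀⟩
  · simp
  let n := Module.finrank ℝ E + 1
  let φ : (Fin n → ℝ) × (Fin n → E) → E := fun p => ∑ j, p.1 j • p.2 j
  suffices φ '' (stdSimplex ℝ (Fin n) ×ˢ univ.pi fun _ => s) = convexHull ℝ s by
    rw [← this]
    exact ((isCompact_stdSimplex ℝ _).prod (isCompact_univ_pi fun _ => hs)).image (by fun_prop)
  refine Subset.antisymm ?_ fun x hx => ?_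
  · rintro _ ⟨⟨w, z⟩, ⟨hw, hz⟩, rfl⟩
    exact (convex_convexHull ℝ s).sum_mem (fun j _ => hw.1 j) hw.2
      fun j _ => subset_convexHull ℝ s (hz j (mem_univ j))
  obtain ⟨ι, _, z, w, hzs, hz, hw0, hw1, hwz⟩ := eq_pos_convex_span_of_mem_convexHull hx
  -- Carathéodory: `x` is a convex combination of at most `n` points of `s`; pad with zero weights.
  obtain ⟨e⟩ : Nonempty (ι ↪ Fin n) := by
    refine Function.Embedding.nonempty_of_card_le ?_
    simpa [n] using hz.card_le_finrank_succ.trans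
      (Nat.succ_le_succ (Submodule.finrank_le (vectorSpan ℝ (range z))))
  refine ⟨(Function.extend e w 0, Function.extend e z fun _ => x₀),
    ⟨⟨fun j => ?_, ?_⟩, fun j _ => ?_⟩, ?_⟩
  · by_cases hj : ∃ i, e i = j
    · obtain ⟨i, rfl⟩ := hj
      simpa [e.injective.extend_apply] using (hw0 i).le
    · simp [Function.extend_apply' _ _ _ hj]
  · rw [← hw1]
    refine (Fintype.sum_of_injective e e.injective _ _ (fun j hj => ?_) fun i => ?_).symm
    · exact Function.extend_apply' _ _ _ (by simpa using hj)
    · exact (e.injective.extend_apply _ _ _).symm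
  · by_cases hj : ∃ i, e i = j
    · obtain ⟨i, rfl⟩ := hj
      simpa [e.injective.extend_apply] using hzs (mem_range_self i)
    · simpa [Function.extend_apply' _ _ _ hj] using hx₀
  · rw [← hwz]
    refine (Fintype.sum_of_injective e e.injective _ _ (fun j hj => ?_) fun i => ?_).symm
    · simp [Function.extend_apply' _ _ _ (by simpa using hj : ¬∃ i, e i = j)]
    · simp [e.injective.extend_apply]

section Hausdorff

variable {E : Type*} [MetricSpace E] {S : ℕ → Set E} {A : Set E}

theorem exists_tendsto_of_tendsto_hausdorffDist (hS : ∀ n, IsBounded (S n))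
    (hSne : ∀ n, (S n).Nonempty) (hA : IsBounded A)
    (h : Tendsto (fun n => hausdorffDist (S n) A) atTop (𝓝 0)) {x : E} (hx : x ∈ A) :
    ∃ y : ℕ → E, (∀ n, y n ∈ S n) ∧ Tendsto y atTop (𝓝 x) := by
  have hy : ∀ n : ℕ, ∃ y ∈ S n, dist y x < hausdorffDist (S n) A + 1 / (n + 1) := fun n =>
    exists_dist_lt_of_hausdorffDist_lt' hx (lt_add_of_pos_right _ Nat.one_div_pos_of_nat)
      (hausdorffEDist_ne_top_of_nonempty_of_bounded (hSne n) ⟨x, hx⟩ (hS n) hA)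
  choose y hyS hyx using hy
  refine ⟨y, hyS, tendsto_iff_dist_tendsto_zero.2 <|
    squeeze_zero (fun _ => dist_nonneg) (fun n => (hyx n).le) ?_⟩
  simpa using h.add tendsto_one_div_add_atTop_nhds_zero_nat

theorem mem_of_tendsto_hausdorffDist (hS : ∀ n, IsBounded (S n)) (hA : IsClosed A)
    (hAne : A.Nonempty) (hAb : IsBounded A)
    (h : Tendsto (fun n => hausdorffDist (S n) A) atTop (𝓝 0)) {y : ℕ → E} (hyS : ∀ n, y n ∈ S n)
    {x : E} (hyx : Tendsto y atTop (𝓝 x)) : x ∈ A := by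
  have hlim : Tendsto (fun n => infDist (y n) A) atTop (𝓝 (infDist x A)) :=
    ((continuous_infDist_pt A).tendsto x).comp hyx
  have hle : ∀ n, infDist (y n) A ≤ hausdorffDist (S n) A := fun n =>
    infDist_le_hausdorffDist_of_mem (hyS n)
      (hausdorffEDist_ne_top_of_nonempty_of_bounded ⟨_, hyS n⟩ hAne (hS n) hAb)
  exact (hA.mem_iff_infDist_zero hAne).2
    (le_antisymm (le_of_tendsto_of_tendsto' hlim h hle) infDist_nonneg)

end Hausdorff

section Hutchinson

variable {ι E : Type*} {f : ι → E → E} {K : Set E}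

theorem mem_hutch {y : E} : y ∈ hutch f K ↔ ∃ i, ∃ x ∈ K, f i x = y := by
  simp [hutch]

theorem hutch_mono : Monotone (hutch f) :=
  fun _ _ h => iUnion_mono fun _ => image_mono h

theorem hutch_iterate_subset (hK : hutch f K ⊆ K) (n : ℕ) : (hutch f)^[n] K ⊆ K := by
  induction n with
  | zero => exact subset_rfl
  | succ n ih =>
    rw [Function.iterate_succ_apply']
    exact (hutch_mono ih).trans hK

theorem hutch_iterate_nonempty [Nonempty ι] (hK : K.Nonempty) (n : ℕ) :
    ((hutch f)^[n] K).Nonempty := by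
  induction n with
  | zero => exact hK
  | succ n ih =>
    obtain ⟨x, hx⟩ := ih
    rw [Function.iterate_succ_apply']
    exact ⟨_, mem_hutch.2 ⟨Classical.arbitrary ι, x, hx, rfl⟩⟩

theorem mem_hutch_iterate_of_isFixedPt {i : ι} {x : E} (hx : Function.IsFixedPt (f i) x)
    (n : ℕ) : x ∈ (hutch f)^[n] {x} := by
  induction n with
  | zero => exact mem_singleton x
  | succ n ih =>
    rw [Function.iterate_succ_apply']
    exact mem_hutch.2 ⟨i, x, ih, hx⟩

theorem isCompact_hutch_iterate [TopologicalSpace E] [Finite ι] (hf : ∀ i, Continuous (f i))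
    (hK : IsCompact K) (n : ℕ) : IsCompact ((hutch f)^[n] K) := by
  induction n with
  | zero => exact hK
  | succ n ih =>
    rw [Function.iterate_succ_apply']
    exact isCompact_iUnion fun i => ih.image (hf i)

theorem hutch_convexHull_subset [AddCommGroup E] [Module ℝ E] {g : ι → E →ᵃ[ℝ] E}
    (hK : hutch (fun i => g i) K ⊆ K) : hutch (fun i => g i) (convexHull ℝ K) ⊆ convexHull ℝ K :=
  iUnion_subset fun i => by
    rw [AffineMap.image_convexHull]
    exact convexHull_mono ((subset_iUnion (fun i => (g i : E → E) '' K) i).trans hK)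

namespace IsAttractor

variable [MetricSpace E] {A : Set E}

theorem subset_of_hutch_subset [Nonempty ι] (hA : IsAttractor f A) (hKne : K.Nonempty)
    (hKc : IsCompact K) (hK : hutch f K ⊆ K) : A ⊆ K := fun x hx => by
  obtain ⟨y, hyS, hyx⟩ := exists_tendsto_of_tendsto_hausdorffDist
    (fun n => hKc.isBounded.subset (hutch_iterate_subset hK n)) (hutch_iterate_nonempty hKne)
    hA.2.1.isBounded (hA.2.2 K hKne hKc) hx
  exact hKc.isClosed.mem_of_tendsto hyx
    (Eventually.of_forall fun n => hutch_iterate_subset hK n (hyS n))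

theorem mem_of_isFixedPt [Finite ι] (hA : IsAttractor f A) (hf : ∀ i, Continuous (f i))
    {i : ι} {x : E} (hx : Function.IsFixedPt (f i) x) : x ∈ A :=
  mem_of_tendsto_hausdorffDist
    (fun n => (isCompact_hutch_iterate hf isCompact_singleton n).isBounded) hA.2.1.isClosed
    hA.1 hA.2.1.isBounded (hA.2.2 {x} (singleton_nonempty x) isCompact_singleton)
    (mem_hutch_iterate_of_isFixedPt hx) tendsto_const_nhds

theorem hutch_subset [Finite ι] (hA : IsAttractor f A) (hf : ∀ i, Continuous (f i)) :
    hutch f A ⊆ A := by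
  rintro _ hy
  obtain ⟨i, x, hx, rfl⟩ := mem_hutch.1 hy
  have : Nonempty ι := ⟨i⟩
  have hconv := hA.2.2 A hA.1 hA.2.1
  have hbdd : ∀ n, IsBounded ((hutch f)^[n] A) := fun n =>
    (isCompact_hutch_iterate hf hA.2.1 n).isBounded
  -- approximate `x` by points `y n` of the iterates; then `f i (y n)` lies in the next iterate
  obtain ⟨y, hyS, hyx⟩ := exists_tendsto_of_tendsto_hausdorffDist hbdd
    (hutch_iterate_nonempty hA.1) hA.2.1.isBounded hconv hx
  refine mem_of_tendsto_hausdorffDist (fun n => hbdd (n + 1)) hA.2.1.isClosed hA.1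
    hA.2.1.isBounded (hconv.comp (tendsto_add_atTop_nat 1)) (fun n => ?_)
    (((hf i).tendsto x).comp hyx)
  rw [Function.comp_apply, Function.iterate_succ_apply']
  exact mem_hutch.2 ⟨i, y n, hyS n, rfl⟩

end IsAttractor

end Hutchinson

section Family

variable {E : Type*} [NormedAddCommGroup E] [NormedSpace ℝ E] {N : ℕ}
  {L : Fin N → E →L[ℝ] E} {a q : Fin N → E} {s t : ℝ}

theorem continuous_fam (i : Fin N) : Continuous (fam L a q t i) := by
  unfold fam
  fun_prop

def famAffine (L : Fin N → E →L[ℝ] E) (a q : Fin N → E) (t : ℝ) (i : Fin N) : E →ᵃ[ℝ] E :=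
  (t • (L i : E →ₗ[ℝ] E)).toAffineMap + AffineMap.const ℝ E (t • a i + q i)

theorem coe_famAffine : (fun i => ⇑(famAffine L a q t i)) = fam L a q t := by
  ext i x
  simp [famAffine, fam, smul_add, add_assoc]

theorem IsSemiLinearFamily.isFixedPt (hsemi : IsSemiLinearFamily L a q) (ht0 : 0 ≤ t)
    (ht : t < 1 / jsr L) (i : Fin N) : Function.IsFixedPt (fam L a q t i) (q i) := by
  obtain ⟨h, hh⟩ := hsemi i
  obtain ⟨M₀, hM₀⟩ := hh 0 le_rfl (ht0.trans_lt ht)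
  -- `fam L a q 0 i` is the constant map `q i`
  have hq : q i = h.symm 0 := by simpa [fam] using hM₀ (h.symm 0)
  obtain ⟨M, hM⟩ := hh t ht0 ht
  rw [Function.IsFixedPt, hM, hq]
  simp

theorem fam_eq_of_isFixedPt {i : Fin N} (hq : Function.IsFixedPt (fam L a q t i) (q i)) (x : E) :
    fam L a q t i x = q i + t • L i (x - q i) := by
  have hsub : fam L a q t i x - fam L a q t i (q i) = t • L i (x - q i) := by
    simp only [fam, map_sub, smul_add, smul_sub]
    abel
  rw [hq.eq] at hsub
  rw [← hsub, add_sub_cancel]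

theorem hutch_fam_convexHull_subset {K : Set E} (hK : hutch (fam L a q t) K ⊆ K) :
    hutch (fam L a q t) (convexHull ℝ K) ⊆ convexHull ℝ K := by
  rw [← coe_famAffine] at hK ⊢
  exact hutch_convexHull_subset hK

theorem hutch_fam_subset_of_le {K : Set E} (hK : Convex ℝ K) (hqK : ∀ i, q i ∈ K)
    (hs : ∀ i, Function.IsFixedPt (fam L a q s i) (q i))
    (ht : ∀ i, Function.IsFixedPt (fam L a q t i) (q i)) (hs0 : 0 ≤ s) (hst : s ≤ t)
    (hKt : hutch (fam L a q t) K ⊆ K) : hutch (fam L a q s) K ⊆ K := by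
  rintro _ hy
  obtain ⟨i, x, hx, rfl⟩ := mem_hutch.1 hy
  have hfx : fam L a q t i x ∈ K := hKt (mem_hutch.2 ⟨i, x, hx, rfl⟩)
  have hseg : fam L a q s i x = q i + (s / t) • (fam L a q t i x - q i) := by
    rw [fam_eq_of_isFixedPt (hs i), fam_eq_of_isFixedPt (ht i), add_sub_cancel_left, smul_smul,
      div_mul_cancel_of_imp fun h => le_antisymm (h ▸ hst) hs0]
  rw [hseg]
  exact hK.add_smul_sub_mem (hqK i) hfx
    ⟨div_nonneg hs0 (hs0.trans hst), div_le_one_of_le₀ hst (hs0.trans hst)⟩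

end Family

theorem stmt19_general {d N : ℕ}
    (L : Fin N → EuclideanSpace ℝ (Fin d) →L[ℝ] EuclideanSpace ℝ (Fin d))
    (a q : Fin N → EuclideanSpace ℝ (Fin d))
    (hsemi : IsSemiLinearFamily L a q)
    (i₀ : Fin N)
    (A : ℝ → Set (EuclideanSpace ℝ (Fin d)))
    (hA : ∀ t : ℝ, 0 ≤ t → t < 1 / jsr L → IsAttractor (fam L a q t) (A t)) :
    (∀ s t : ℝ, 0 ≤ s → s ≤ t → t < 1 / jsr L →
      convexHull ℝ (A s) ⊆ convexHull ℝ (A t)) ∧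
    (∀ t : ℝ, 0 ≤ t → t < 1 / jsr L →
      hutch (fam L a q t) (convexHull ℝ (A t)) ⊆ convexHull ℝ (A t) ∧
      ∀ K : Set (EuclideanSpace ℝ (Fin d)), K.Nonempty → Convex ℝ K → IsCompact K →
        hutch (fam L a q t) K ⊆ K → convexHull ℝ (A t) ⊆ K) := by
  have : Nonempty (Fin N) := ⟨i₀⟩
  have hinv : ∀ t, 0 ≤ t → t < 1 / jsr L →
      hutch (fam L a q t) (convexHull ℝ (A t)) ⊆ convexHull ℝ (A t) := fun t ht0 ht =>
    hutch_fam_convexHull_subset ((hA t ht0 ht).hutch_subset continuous_fam)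
  have hmin : ∀ t, 0 ≤ t → t < 1 / jsr L →
      ∀ K : Set (EuclideanSpace ℝ (Fin d)), K.Nonempty → Convex ℝ K → IsCompact K →
        hutch (fam L a q t) K ⊆ K → convexHull ℝ (A t) ⊆ K :=
    fun t ht0 ht K hKne hKconv hKc hK =>
      convexHull_min ((hA t ht0 ht).subset_of_hutch_subset hKne hKc hK) hKconv
  refine ⟨fun s t hs hst ht => ?_, fun t ht0 ht => ⟨hinv t ht0 ht, hmin t ht0 ht⟩⟩
  have ht0 : 0 ≤ t := hs.trans hst
  have hs' : s < 1 / jsr L := hst.trans_lt ht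
  have hAt := hA t ht0 ht
  have hq : ∀ i, q i ∈ convexHull ℝ (A t) := fun i =>
    subset_convexHull ℝ _ (hAt.mem_of_isFixedPt continuous_fam (hsemi.isFixedPt ht0 ht i))
  exact hmin s hs hs' _ (hAt.1.mono (subset_convexHull ℝ _)) (convex_convexHull ℝ _)
    (isCompact_convexHull hAt.2.1) (hutch_fam_subset_of_le (convex_convexHull ℝ _) hq
      (hsemi.isFixedPt hs hs') (hsemi.isFixedPt ht0 ht) hs hst (hinv t ht0 ht))

/-- Let `F_t` be a bounded one-parameter family on `ℝ^d` with attractor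
`A_t` for `t ∈ [0, t₀)` and `K_t := conv A_t`. Then `K_s ⊆ K_t` whenever `0 ≤ s ≤ t < t₀`;
moreover `K_t` is the smallest nonempty convex compact set `K` with `F_t(K) ⊆ K`. -/
theorem stmt19 {d N : ℕ} (hN : 2 ≤ N)
    (L : Fin N → EuclideanSpace ℝ (Fin d) →L[ℝ] EuclideanSpace ℝ (Fin d))
    (hL : ∀ i, Function.Bijective (L i))
    (r : Fin N → ℝ) (hr : ∀ i, 0 < r i)
    (hsim : ∀ (i : Fin N) (x : EuclideanSpace ℝ (Fin d)), ‖L i x‖ = r i * ‖x‖)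
    (a q : Fin N → EuclideanSpace ℝ (Fin d))
    (hρ : 0 < jsr L)
    (hsemi : IsSemiLinearFamily L a q)
    (i₀ : Fin N) (hmax : ∀ i : Fin N, i ≠ i₀ → r i < r i₀)
    (A : ℝ → Set (EuclideanSpace ℝ (Fin d)))
    (hA : ∀ t : ℝ, 0 ≤ t → t < 1 / jsr L → IsAttractor (fam L a q t) (A t)) :
    (∀ s t : ℝ, 0 ≤ s → s ≤ t → t < 1 / jsr L →
      convexHull ℝ (A s) ⊆ convexHull ℝ (A t)) ∧
    (∀ t : ℝ, 0 ≤ t → t < 1 / jsr L →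
      hutch (fam L a q t) (convexHull ℝ (A t)) ⊆ convexHull ℝ (A t) ∧
      ∀ K : Set (EuclideanSpace ℝ (Fin d)), K.Nonempty → Convex ℝ K → IsCompact K →
        hutch (fam L a q t) K ⊆ K → convexHull ℝ (A t) ⊆ K) :=
  stmt19_general L a q hsemi i₀ A hA
end
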